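/- Let X = ℓ²(ℕ) and U = ℂ. Define x1(k) := 0, x0(k) := e_k/k (e_k the k-th standard orthonormal basis vector of ℓ²(ℕ)), and u0(k) := k^{-3/2} for k ∈ ℕ. Then x1 and x0 are Bessel sequences in X and u0 ∈ ℓ²(ℕ); with synthesis operators Ξ0 ∈ L(ℓ²(ℕ), X) and Υ0 ∈ L(ℓ²(ℕ), ℂ), the following hold: (a) if ξ ∈ ℓ²(ℕ) and υ ∈ ℂ satisfy Ξ0*ξ + Υ0*υ = 0, then ξ = 0 and υ = 0 (consequently Σ_is = {(0,0)}); and (b) there is no K ∈ L(X, ℂ) such that for every w ∈ ℓ²(ℕ) there exists v ∈ ℓ²(ℕ) with Ξ0 v = Ξ0 w and Υ0 v = K Ξ0 w. -/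

import Mathlib

noncomputable section
open ContinuousLinearMap

/-- `ℓ²(ℕ)`: the Hilbert space of square-summable complex sequences. -/
abbrev l2 : Type := lp (fun _ : ℕ => ℂ) 2

/-- `η` is a Bessel sequence in `Y`. -/
def Bessel {Y : Type} [NormedAddCommGroup Y] [InnerProductSpace ℂ Y] (η : ℕ → Y) : Prop :=
  ∃ α : ℝ, 0 < α ∧ ∀ y : Y, ∑' k : ℕ, ‖(inner ℂ y (η k) : ℂ)‖ ^ 2 ≤ α * ‖y‖ ^ 2

/-- `T` is the synthesis operator associated with `η`: `T w = ∑ₖ wₖ • ηₖ`. -/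
def IsSynthesis {Y : Type} [NormedAddCommGroup Y] [InnerProductSpace ℂ Y] (η : ℕ → Y)
    (T : l2 →L[ℂ] Y) : Prop :=
  ∀ w : l2, HasSum (fun k : ℕ => w k • η k) (T w)


/-! Testing `Ξ0* ξ + Υ0* υ = 0` against the basis vector `e_k` gives `ξ_k / (k+1) + υ (k+1)^(-3/2) = 0`,
so `ξ_k = -υ (k+1)^(-1/2)`; since `((k+1)^(-1/2))` is not square-summable, `υ = 0` and then `ξ = 0`.
The remaining claims are formal consequences of this injectivity: if `(A, B) ∈ Σ_is` then
`A Ξ0 + B Υ0 = 0`, whence `Ξ0* (A* y) + Υ0* (B* y) = 0` for all `y`; and a `K` as in (b) would give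
`Υ0 = K Ξ0` (as `Ξ0` is injective), whence `Ξ0* (K* 1) + Υ0* (-1) = 0`. -/

section Synthesis

variable {F : Type} [NormedAddCommGroup F] [InnerProductSpace ℂ F]

theorem IsSynthesis.apply_single {η : ℕ → F} {T : l2 →L[ℂ] F} (hT : IsSynthesis η T) (k : ℕ) :
    T (lp.single 2 k 1) = η k := by
  refine (hT _).unique (hasSum_single k fun j hj => by simp [hj]) |>.trans ?_
  simp

theorem continuousLinearMap_ext_l2 {A B : l2 →L[ℂ] F}
    (h : ∀ k, A (lp.single 2 k 1) = B (lp.single 2 k 1)) : A = B := by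
  refine lp.ext_continuousLinearMap (by simp) fun k => ContinuousLinearMap.ext_ring ?_
  simpa using h k

variable [CompleteSpace F]

theorem adjoint_apply_l2 (T : l2 →L[ℂ] F) (y : F) (k : ℕ) :
    adjoint T y k = inner ℂ (T (lp.single 2 k 1)) y := by
  rw [← adjoint_inner_right, lp.inner_single_left]
  simp

theorem norm_inner_apply_single (T : l2 →L[ℂ] F) (y : F) (k : ℕ) :
    ‖(inner ℂ y (T (lp.single 2 k 1)) : ℂ)‖ = ‖adjoint T y k‖ := by
  rw [adjoint_apply_l2, ← inner_conj_symm, RCLike.norm_conj]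

theorem l2_norm_sq_eq_tsum (f : l2) : ‖f‖ ^ 2 = ∑' k, ‖f k‖ ^ 2 := by
  simpa [Real.rpow_two] using lp.norm_rpow_eq_tsum (p := 2) (by norm_num) f

theorem IsSynthesis.bessel {η : ℕ → F} {T : l2 →L[ℂ] F} (hT : IsSynthesis η T) : Bessel η := by
  refine ⟨‖T‖ ^ 2 + 1, by positivity, fun y => ?_⟩
  calc ∑' k, ‖(inner ℂ y (η k) : ℂ)‖ ^ 2 = ‖adjoint T y‖ ^ 2 := by
        simp_rw [← hT.apply_single, norm_inner_apply_single, l2_norm_sq_eq_tsum]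
    _ ≤ (‖T‖ * ‖y‖) ^ 2 := by
        gcongr
        simpa [LinearIsometryEquiv.norm_map] using (adjoint T).le_opNorm y
    _ ≤ (‖T‖ ^ 2 + 1) * ‖y‖ ^ 2 := by nlinarith [sq_nonneg ‖y‖]

end Synthesis

theorem memℓp_apply_single (φ : l2 →L[ℂ] ℂ) : Memℓp (fun k => φ (lp.single 2 k 1)) 2 :=
  (lp.memℓp (adjoint φ 1)).mono' fun k => by
    simpa using (norm_inner_apply_single φ 1 k).le

theorem IsSynthesis.apply_diagonal {c : ℕ → ℂ} {T : l2 →L[ℂ] l2}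
    (hT : IsSynthesis (fun k => c k • lp.single 2 k (1 : ℂ)) T) (w : l2) (j : ℕ) :
    T w j = c j * w j := by
  refine ((hT w).mapL (lp.evalCLM ℂ _ 2 j)).unique
    (hasSum_single j fun k hk => by simp [lp.evalCLM, hk]) |>.trans ?_
  simp [lp.evalCLM, mul_comm]

theorem IsSynthesis.injective_of_diagonal {c : ℕ → ℂ} {T : l2 →L[ℂ] l2}
    (hT : IsSynthesis (fun k => c k • lp.single 2 k (1 : ℂ)) T) (hc : ∀ k, c k ≠ 0) :
    Function.Injective T := fun v w h => lp.ext <| funext fun j => by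
  simpa [hT.apply_diagonal, hc j] using congrArg (fun z : l2 => z j) h

section Adjoint

variable {𝕜 E F G H : Type*} [RCLike 𝕜]
  [NormedAddCommGroup E] [InnerProductSpace 𝕜 E] [CompleteSpace E]
  [NormedAddCommGroup F] [InnerProductSpace 𝕜 F] [CompleteSpace F]
  [NormedAddCommGroup G] [InnerProductSpace 𝕜 G] [CompleteSpace G]
  [NormedAddCommGroup H] [InnerProductSpace 𝕜 H] [CompleteSpace H]
  {S : E →L[𝕜] F} {T : E →L[𝕜] G}

theorem eq_zero_of_comp_add_comp_eq_zero
    (hST : ∀ ξ υ, adjoint S ξ + adjoint T υ = 0 → ξ = 0 ∧ υ = 0)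
    {A : F →L[𝕜] H} {B : G →L[𝕜] H} (h : A ∘L S + B ∘L T = 0) : A = 0 ∧ B = 0 := by
  have hy (y : H) : adjoint A y = 0 ∧ adjoint B y = 0 := by
    refine hST _ _ ?_
    simpa [adjoint_comp] using congrArg (fun L => adjoint L y) h
  constructor <;> rw [← LinearIsometryEquiv.map_eq_zero_iff adjoint] <;> ext1 y
  exacts [(hy y).1, (hy y).2]

theorem ne_comp_of_adjoint_add_adjoint_injective [Nontrivial G]
    (hST : ∀ ξ υ, adjoint S ξ + adjoint T υ = 0 → ξ = 0 ∧ υ = 0) (K : F →L[𝕜] G) :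
    T ≠ K ∘L S := by
  intro h
  obtain ⟨y, hy⟩ := exists_ne (0 : G)
  refine hy (neg_eq_zero.1 (hST (adjoint K y) (-y) ?_).2)
  simp [h, adjoint_comp]

end Adjoint

theorem natCast_add_one_mul_rpow_neg_three_halves (k : ℕ) :
    ((k : ℝ) + 1) * ((k : ℝ) + 1) ^ (-(3 : ℝ) / 2) = ((k : ℝ) + 1) ^ (-(1 : ℝ) / 2) := by
  rw [← Real.rpow_one_add' (by positivity) (by norm_num)]
  norm_num

theorem not_memℓp_rpow_neg_half :
    ¬ Memℓp (fun k : ℕ => ((((k : ℝ) + 1) ^ (-(1 : ℝ) / 2) : ℝ) : ℂ)) 2 := by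
  rw [memℓp_gen_iff (by norm_num)]
  intro h
  have := (Real.summable_one_div_nat_add_rpow 1 1).1 <| h.congr fun k => by
    have hk : (0 : ℝ) ≤ k + 1 := by positivity
    rw [Complex.norm_real, Real.norm_of_nonneg (Real.rpow_nonneg hk _), ← Real.rpow_mul hk,
      abs_of_nonneg hk]
    norm_num [Real.rpow_neg_one]
  norm_num at this

theorem eq_zero_of_adjoint_add_adjoint_eq_zero {Ξ : l2 →L[ℂ] l2} {Υ : l2 →L[ℂ] ℂ}
    (hΞ : IsSynthesis (fun k : ℕ => ((k + 1 : ℂ))⁻¹ • lp.single 2 k (1 : ℂ)) Ξ)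
    (hΥ : IsSynthesis (fun k : ℕ => (((k + 1 : ℝ) ^ (-(3 : ℝ) / 2) : ℝ) : ℂ)) Υ)
    (ξ : l2) (υ : ℂ) (h : adjoint Ξ ξ + adjoint Υ υ = 0) : ξ = 0 ∧ υ = 0 := by
  have hξ (k : ℕ) : ξ k = -υ * (((k + 1 : ℝ) ^ (-(1 : ℝ) / 2) : ℝ) : ℂ) := by
    have hk := congrArg (fun z : l2 => z k) h
    simp only [lp.coeFn_add, Pi.add_apply, adjoint_apply_l2, hΞ.apply_single, hΥ.apply_single,
      inner_smul_left, lp.inner_single_left, RCLike.inner_apply, map_inv₀, map_add, map_natCast,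
      map_one, mul_one, Complex.conj_ofReal, ZeroMemClass.coe_zero, PreLp.zero_apply] at hk
    have hr : ((k : ℂ) + 1) * (((k + 1 : ℝ) ^ (-(3 : ℝ) / 2) : ℝ) : ℂ)
        = (((k + 1 : ℝ) ^ (-(1 : ℝ) / 2) : ℝ) : ℂ) := by
      exact_mod_cast congrArg ((↑) : ℝ → ℂ) (natCast_add_one_mul_rpow_neg_three_halves k)
    have hk0 : (k : ℂ) + 1 ≠ 0 := Nat.cast_add_one_ne_zero k
    rw [← hr, ← mul_inv_cancel_left₀ hk0 (ξ k), eq_neg_of_add_eq_zero_left hk]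
    ring
  have hυ : υ = 0 := by
    by_contra hυ
    refine not_memℓp_rpow_neg_half ?_
    convert (lp.memℓp ξ).const_smul (-υ)⁻¹ using 1
    funext k
    simp [hξ, hυ]
  exact ⟨lp.ext <| funext fun k => by simp [hξ, hυ], hυ⟩

theorem stmt_17
    -- the data: indices are shifted so that `k : ℕ` denotes the (k+1)-st term
    (x1 : ℕ → l2) (hx1 : ∀ k : ℕ, x1 k = 0)
    (x0 : ℕ → l2) (hx0 : ∀ k : ℕ, x0 k = ((k + 1 : ℂ))⁻¹ • lp.single 2 k (1 : ℂ))
    (u0 : ℕ → ℂ) (hu0 : ∀ k : ℕ, u0 k = (((k + 1 : ℝ) ^ (-(3 : ℝ) / 2) : ℝ) : ℂ))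
    (Ξ1 Ξ0 : l2 →L[ℂ] l2) (Υ0 : l2 →L[ℂ] ℂ)
    (hΞ1 : IsSynthesis x1 Ξ1) (hΞ0 : IsSynthesis x0 Ξ0)
    (hΥ0 : ∀ w : l2, HasSum (fun k : ℕ => w k * u0 k) (Υ0 w)) :
    -- x1 and x0 are Bessel sequences and u0 ∈ ℓ²
    Bessel x1 ∧ Bessel x0 ∧ Memℓp u0 2 ∧
    -- (a) Ξ0* ξ + Υ0* υ = 0 implies ξ = 0 and υ = 0
    (∀ (ξ : l2) (υ : ℂ), adjoint Ξ0 ξ + adjoint Υ0 υ = 0 → ξ = 0 ∧ υ = 0) ∧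
    -- consequently Σ_is = {(0, 0)}
    ({p : (l2 →L[ℂ] l2) × (ℂ →L[ℂ] l2) | ∀ k : ℕ, x1 k = p.1 (x0 k) + p.2 (u0 k)}
      = {(0, 0)}) ∧
    -- (b) no bounded K satisfies the range inclusion
    ¬ ∃ K : l2 →L[ℂ] ℂ, ∀ w : l2, ∃ v : l2, Ξ0 v = Ξ0 w ∧ Υ0 v = K (Ξ0 w) := by
  have hΥ0 : IsSynthesis u0 Υ0 := hΥ0
  have hΞ0' := funext hx0 ▸ hΞ0
  have ha := eq_zero_of_adjoint_add_adjoint_eq_zero hΞ0' (funext hu0 ▸ hΥ0)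
  refine ⟨hΞ1.bessel, hΞ0.bessel, ?_, ha, ?_, ?_⟩
  · simpa only [hΥ0.apply_single] using memℓp_apply_single Υ0
  · ext ⟨A, B⟩
    simp only [Set.mem_ofPred_eq, Set.mem_singleton_iff, hx1, Prod.mk.injEq]
    refine ⟨fun h => eq_zero_of_comp_add_comp_eq_zero ha (continuousLinearMap_ext_l2 fun k => ?_),
      by rintro ⟨rfl, rfl⟩ k; simp⟩
    simp [hΞ0.apply_single, hΥ0.apply_single, ← h k]
  · rintro ⟨K, hK⟩
    refine ne_comp_of_adjoint_add_adjoint_injective ha K (ContinuousLinearMap.ext fun w => ?_)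
    obtain ⟨v, hv, hKv⟩ := hK w
    rwa [hΞ0'.injective_of_diagonal (fun k => by simp [Nat.cast_add_one_ne_zero]) hv] at hKv
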